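/- Classification calibration of the SD-loss: if p* ∈ Δ_J° has a unique maximal coordinate i (p_i* > p_j* for all j ≠ i), then any p minimizing the conditional SD-risk r_{β,λ}(p*, ·) over Δ_J satisfies argmax_j p_j = i, i.e., the induced classifier agrees with the Bayes classifier. -/

import Mathlib

/-! Since `1 + β = A + B`, each summand of the conditional SD-risk is, up to the factor
`1 / (A B)`, the gap in the weighted AM–GM (Young) inequality
`(A + B) x^B y^A ≤ B x^(A+B) + A y^(A+B)` at `x = p_j`, `y = p*_j`, which vanishes only for
`x = y`. So `r(p*, ·) ≥ 0 = r(p*, p*)` with equality only at `p*`: a minimizer is `p*` itself,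
and its argmax is that of `p*`. -/

open Finset

/-- The conditional SD-risk `r_{β,λ}(p*, p)`. -/
noncomputable def condSDRisk (A B beta : ℝ) {J : ℕ} (pstar p : Fin J → ℝ) : ℝ :=
  (1 / A) * ∑ j, (p j ^ (1 + beta)
    - ((1 + beta) / B) * p j ^ B * pstar j ^ A
    + (A / B) * pstar j ^ (1 + beta))

open Real

section Young

variable {A B x y : ℝ}

theorem young_rpow_lt_iff (hA : 0 < A) (hB : 0 < B) (hx : 0 ≤ x) (hy : 0 ≤ y) :
    (A + B) * (x ^ B * y ^ A) < B * x ^ (A + B) + A * y ^ (A + B) ↔ x ≠ y := by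
  have hs : 0 < A + B := add_pos hA hB
  have hgeom : x ^ B * y ^ A = (x ^ (A + B)) ^ (B / (A + B)) * (y ^ (A + B)) ^ (A / (A + B)) := by
    rw [← rpow_mul hx, ← rpow_mul hy, mul_div_cancel₀ _ hs.ne', mul_div_cancel₀ _ hs.ne']
  have harith : B * x ^ (A + B) + A * y ^ (A + B)
      = (A + B) * (B / (A + B) * x ^ (A + B) + A / (A + B) * y ^ (A + B)) := by
    field_simp
  rw [hgeom, harith, mul_lt_mul_iff_right₀ hs,
    geom_mean_lt_arith_mean2_weighted_iff_of_pos (by positivity) (by positivity)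
      (by positivity) (by positivity) (by field_simp; ring),
    Ne, rpow_left_inj hx hy hs.ne']

theorem young_rpow_le (hA : 0 < A) (hB : 0 < B) (hx : 0 ≤ x) (hy : 0 ≤ y) :
    (A + B) * (x ^ B * y ^ A) ≤ B * x ^ (A + B) + A * y ^ (A + B) := by
  by_cases hxy : x = y
  · subst hxy
    rw [← rpow_add' hx (add_pos hB hA).ne', add_comm B A]
    exact le_of_eq (by ring)
  · exact ((young_rpow_lt_iff hA hB hx hy).2 hxy).le

noncomputable def youngGap (A B x y : ℝ) : ℝ :=
  B * x ^ (A + B) + A * y ^ (A + B) - (A + B) * (x ^ B * y ^ A)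

theorem youngGap_nonneg (hA : 0 < A) (hB : 0 < B) (hx : 0 ≤ x) (hy : 0 ≤ y) :
    0 ≤ youngGap A B x y :=
  sub_nonneg.2 (young_rpow_le hA hB hx hy)

theorem youngGap_eq_zero_iff (hA : 0 < A) (hB : 0 < B) (hx : 0 ≤ x) (hy : 0 ≤ y) :
    youngGap A B x y = 0 ↔ x = y := by
  rw [youngGap, sub_eq_zero, ← not_iff_not, ← ne_eq, ← ne_eq,
    ← young_rpow_lt_iff hA hB hx hy, (young_rpow_le hA hB hx hy).lt_iff_ne, ne_comm]

end Young

section condSDRisk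

variable {A B beta : ℝ} {J : ℕ} {pstar p : Fin J → ℝ}

theorem condSDRisk_eq_sum_youngGap (hs : 1 + beta = A + B) (hA : A ≠ 0) (hB : B ≠ 0) :
    condSDRisk A B beta pstar p = (A * B)⁻¹ * ∑ j, youngGap A B (p j) (pstar j) := by
  rw [condSDRisk, hs, mul_sum, mul_sum]
  refine sum_congr rfl fun j _ => ?_
  rw [youngGap]
  field_simp
  ring

theorem condSDRisk_nonneg (hs : 1 + beta = A + B) (hA : 0 < A) (hB : 0 < B)
    (hps : ∀ j, 0 ≤ pstar j) (hp : ∀ j, 0 ≤ p j) : 0 ≤ condSDRisk A B beta pstar p := by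
  rw [condSDRisk_eq_sum_youngGap hs hA.ne' hB.ne']
  exact mul_nonneg (by positivity)
    (sum_nonneg fun j _ => youngGap_nonneg hA hB (hp j) (hps j))

theorem condSDRisk_eq_zero_iff (hs : 1 + beta = A + B) (hA : 0 < A) (hB : 0 < B)
    (hps : ∀ j, 0 ≤ pstar j) (hp : ∀ j, 0 ≤ p j) :
    condSDRisk A B beta pstar p = 0 ↔ p = pstar := by
  rw [condSDRisk_eq_sum_youngGap hs hA.ne' hB.ne', mul_eq_zero_iff_left (by positivity),
    sum_eq_zero_iff_of_nonneg fun j _ => youngGap_nonneg hA hB (hp j) (hps j), funext_iff]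
  simp only [mem_univ, true_implies, youngGap_eq_zero_iff hA hB (hp _) (hps _)]

end condSDRisk

theorem sdLoss_classification_calibrated_general (J : ℕ)
    (beta lam A B : ℝ)
    (hA : A = 1 + lam * (1 - beta)) (hB : B = beta - lam * (1 - beta))
    (hApos : 0 < A) (hBpos : 0 < B)
    (pstar : Fin J → ℝ) (hps : ∀ j, 0 < pstar j) (hpssum : ∑ j, pstar j = 1)
    (i : Fin J) (hi : ∀ j, j ≠ i → pstar j < pstar i)
    (p : Fin J → ℝ) (hp0 : ∀ j, 0 ≤ p j)
    (hmin : ∀ q : Fin J → ℝ, (∀ j, 0 ≤ q j) → ∑ j, q j = 1 →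
      condSDRisk A B beta pstar p ≤ condSDRisk A B beta pstar q) :
    ∀ j, j ≠ i → p j < p i := by
  have hs : 1 + beta = A + B := by rw [hA, hB]; ring
  have hps0 : ∀ j, 0 ≤ pstar j := fun j => (hps j).le
  have hrisk_star : condSDRisk A B beta pstar pstar = 0 :=
    (condSDRisk_eq_zero_iff hs hApos hBpos hps0 hps0).2 rfl
  have hrisk : condSDRisk A B beta pstar p = 0 :=
    le_antisymm (hrisk_star ▸ hmin pstar hps0 hpssum)
      (condSDRisk_nonneg hs hApos hBpos hps0 hp0)
  rw [(condSDRisk_eq_zero_iff hs hApos hBpos hps0 hp0).1 hrisk]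
  exact hi

/-- Classification calibration of the SD-loss: if `p*` (strictly positive) has a
unique maximal coordinate `i`, then any minimizer of the conditional SD-risk
over the simplex has its argmax at `i`. -/
theorem sdLoss_classification_calibrated (J : ℕ) (hJ : 2 ≤ J)
    (beta lam A B : ℝ) (hbeta0 : 0 ≤ beta) (hbeta1 : beta ≤ 1)
    (hA : A = 1 + lam * (1 - beta)) (hB : B = beta - lam * (1 - beta))
    (hApos : 0 < A) (hBpos : 0 < B)
    (pstar : Fin J → ℝ) (hps : ∀ j, 0 < pstar j) (hpssum : ∑ j, pstar j = 1)
    (i : Fin J) (hi : ∀ j, j ≠ i → pstar j < pstar i)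
    (p : Fin J → ℝ) (hp0 : ∀ j, 0 ≤ p j) (hpsum : ∑ j, p j = 1)
    (hmin : ∀ q : Fin J → ℝ, (∀ j, 0 ≤ q j) → ∑ j, q j = 1 →
      condSDRisk A B beta pstar p ≤ condSDRisk A B beta pstar q) :
    ∀ j, j ≠ i → p j < p i :=
  sdLoss_classification_calibrated_general J beta lam A B hA hB hApos hBpos pstar hps hpssum i hi p
    hp0 hmin
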